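/- arXiv:2412.12014 — 2 statements merged into one kernel-verified Lean document; each statement's English description precedes it below -/
import Mathlib

section
/- The ε-covering number (with respect to the Euclidean ℓ² norm) of the ℓ¹ ball of radius β in ℝ^d satisfies log N(B_β, ε, ‖·‖₂) ≤ ⌈β²/ε²⌉ · log(2d). -/
/-! Maurey's empirical method, made deterministic by a greedy choice. A point `a` of the `ℓ¹` ball
of radius `β` lies in the convex hull of the `2d` vertices `±β eᵢ`, so every linear functional is
at most as large at some vertex as at `a`. Adding at each step the vertex that minimises the
functional `⟪u - a, ·⟫`, where `u` is the current error, increases `‖u‖²` by at most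
`β² - ‖a‖²`. Starting from `u = -a` (the vertex `0`), after `k` steps the average of the `k`
chosen vertices and `0` is within `β / √(k + 1) < ε` of `a` for `k = ⌈β²/ε²⌉`; there are at most
`(2d)ᵏ` such averages. -/

open Finset
open scoped RealInnerProductSpace

section Maurey

variable {E ι : Type*} [NormedAddCommGroup E] [InnerProductSpace ℝ E]

theorem norm_add_sub_sq_le_of_inner_le {u v a : E} {β : ℝ} (hv : ‖v‖ ≤ β)
    (h : ⟪u - a, v⟫ ≤ ⟪u - a, a⟫) :
    ‖u + v - a‖ ^ 2 ≤ ‖u‖ ^ 2 + β ^ 2 - ‖a‖ ^ 2 := by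
  have hv2 : ‖v‖ ^ 2 ≤ β ^ 2 := pow_le_pow_left₀ (norm_nonneg v) hv 2
  have expand : ‖u + v - a‖ ^ 2 = ‖u‖ ^ 2 + 2 * (⟪u - a, v⟫ - ⟪u - a, a⟫) + ‖v‖ ^ 2 - ‖a‖ ^ 2 := by
    rw [add_sub_assoc, norm_add_sq_real, norm_sub_sq_real, inner_sub_left, inner_sub_left,
      inner_sub_right, real_inner_self_eq_norm_sq, real_inner_comm a v]
    ring
  linarith

variable {x : ι → E} {a : E} {β : ℝ}

theorem norm_le_of_forall_exists_inner_le (hx : ∀ i, ‖x i‖ ≤ β)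
    (ha : ∀ w, ∃ i, ⟪w, x i⟫ ≤ ⟪w, a⟫) : ‖a‖ ≤ β := by
  obtain ⟨i, hi⟩ := ha (-a)
  rw [inner_neg_left, inner_neg_left, real_inner_self_eq_norm_sq, neg_le_neg_iff] at hi
  have hβ : 0 ≤ β := (norm_nonneg _).trans (hx i)
  nlinarith [real_inner_le_norm a (x i), hx i, norm_nonneg a]

theorem exists_norm_add_sum_sub_sq_le (hx : ∀ i, ‖x i‖ ≤ β)
    (ha : ∀ w, ∃ i, ⟪w, x i⟫ ≤ ⟪w, a⟫) (s : E) (k : ℕ) :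
    ∃ f : Fin k → ι,
      ‖s + ∑ j, x (f j) - (k : ℝ) • a‖ ^ 2 ≤ ‖s‖ ^ 2 + k * (β ^ 2 - ‖a‖ ^ 2) := by
  induction k with
  | zero => exact ⟨finZeroElim, by simp⟩
  | succ k ih =>
    obtain ⟨f, hf⟩ := ih
    set u := s + ∑ j, x (f j) - (k : ℝ) • a
    obtain ⟨i, hi⟩ := ha (u - a)
    refine ⟨Fin.snoc f i, ?_⟩
    have step : s + ∑ j, x (Fin.snoc (α := fun _ => ι) f i j) - ((k + 1 : ℕ) : ℝ) • a
        = u + x i - a := by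
      simp only [Fin.sum_univ_castSucc, Fin.snoc_castSucc, Fin.snoc_last, u]
      push_cast
      module
    rw [step]
    push_cast
    linarith [norm_add_sub_sq_le_of_inner_le (hx i) hi]

theorem exists_norm_sub_smul_sum_sq_le (hx : ∀ i, ‖x i‖ ≤ β)
    (ha : ∀ w, ∃ i, ⟪w, x i⟫ ≤ ⟪w, a⟫) (k : ℕ) :
    ∃ f : Fin k → ι, ‖a - ((k : ℝ) + 1)⁻¹ • ∑ j, x (f j)‖ ^ 2 ≤ β ^ 2 / (k + 1) := by
  obtain ⟨f, hf⟩ := exists_norm_add_sum_sub_sq_le hx ha (-a) k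
  refine ⟨f, ?_⟩
  have hk : (0 : ℝ) < k + 1 := by positivity
  have ha2 : ‖a‖ ^ 2 ≤ β ^ 2 :=
    pow_le_pow_left₀ (norm_nonneg a) (norm_le_of_forall_exists_inner_le hx ha) 2
  have rescale : a - ((k : ℝ) + 1)⁻¹ • ∑ j, x (f j)
      = -((k : ℝ) + 1)⁻¹ • (-a + ∑ j, x (f j) - (k : ℝ) • a) := by
    match_scalars <;> field_simp
    ring
  have bound : ‖-a + ∑ j, x (f j) - (k : ℝ) • a‖ ^ 2 ≤ (k + 1) * β ^ 2 := by
    rw [norm_neg] at hf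
    nlinarith [sq_nonneg ‖a‖, Nat.cast_nonneg (α := ℝ) k]
  rw [rescale, norm_smul, mul_pow, norm_neg, Real.norm_eq_abs, abs_inv, abs_of_pos hk, inv_pow,
    inv_mul_le_iff₀ (by positivity)]
  calc _ ≤ (k + 1) * β ^ 2 := bound
    _ = ((k : ℝ) + 1) ^ 2 * (β ^ 2 / (k + 1)) := by field_simp

end Maurey

section L1Ball

variable {n : Type*} [Fintype n] [DecidableEq n]

noncomputable def l1Vertex (β : ℝ) (p : n × Bool) : EuclideanSpace ℝ n :=
  EuclideanSpace.single p.1 (if p.2 then β else -β)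

theorem norm_l1Vertex (β : ℝ) (p : n × Bool) : ‖l1Vertex β p‖ = |β| := by
  rcases p with ⟨i, _ | _⟩ <;> simp [l1Vertex]

theorem inner_l1Vertex (β : ℝ) (p : n × Bool) (w : EuclideanSpace ℝ n) :
    ⟪w, l1Vertex β p⟫ = (if p.2 then β else -β) * w p.1 := by
  simp [l1Vertex, EuclideanSpace.inner_single_right]

theorem exists_inner_l1Vertex_le [Nonempty n] {β : ℝ} {a : EuclideanSpace ℝ n}
    (ha : ∑ i, |a i| ≤ β) (w : EuclideanSpace ℝ n) :
    ∃ p, ⟪w, l1Vertex β p⟫ ≤ ⟪w, a⟫ := by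
  obtain ⟨i₀, -, hi₀⟩ := univ.exists_max_image (fun i => |w i|) univ_nonempty
  obtain ⟨b, hb⟩ : ∃ b : Bool, (if b then β else -β) * w i₀ = -(β * |w i₀|) := by
    rcases abs_cases (w i₀) with ⟨h, -⟩ | ⟨h, -⟩
    · exact ⟨false, by simp [h]⟩
    · exact ⟨true, by simp [h]⟩
  refine ⟨(i₀, b), ?_⟩
  rw [inner_l1Vertex, hb]
  calc -(β * |w i₀|) ≤ -∑ i, |w i₀| * |a i| := by
        rw [← mul_sum]
        exact neg_le_neg (mul_comm β _ ▸ mul_le_mul_of_nonneg_left ha (abs_nonneg _))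
    _ ≤ -∑ i, |w i| * |a i| :=
        neg_le_neg (sum_le_sum fun i _ =>
          mul_le_mul_of_nonneg_right (hi₀ i (mem_univ i)) (abs_nonneg _))
    _ ≤ ∑ i, w i * a i := by
        rw [← sum_neg_distrib]
        gcongr with i
        rw [← abs_mul]
        exact neg_abs_le _
    _ = ⟪w, a⟫ := by simp [PiLp.inner_apply, mul_comm]

end L1Ball

theorem l1_ball_covering_number_general {d : ℕ} (hd : 0 < d) (β ε : ℝ)
    (hε : 0 < ε) :
    ∃ C : Finset (EuclideanSpace ℝ (Fin d)),
      ({a : EuclideanSpace ℝ (Fin d) | ∑ i, |a i| ≤ β} ⊆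
        ⋃ c ∈ C, Metric.ball c ε) ∧
      0 < C.card ∧
      Real.log C.card ≤ (⌈β ^ 2 / ε ^ 2⌉₊ : ℝ) * Real.log (2 * d) := by
  have : Nonempty (Fin d) := Fin.pos_iff_nonempty.1 hd
  set k := ⌈β ^ 2 / ε ^ 2⌉₊
  have hk : β ^ 2 / (k + 1) < ε ^ 2 := by
    rw [div_lt_iff₀ (by positivity)]
    nlinarith [(div_le_iff₀ (by positivity)).1 (Nat.le_ceil (β ^ 2 / ε ^ 2))]
  set C := univ.image fun f : Fin k → Fin d × Bool => ((k : ℝ) + 1)⁻¹ • ∑ j, l1Vertex β (f j)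
  have hC : 0 < C.card := (univ_nonempty.image _).card_pos
  refine ⟨C, fun a ha => ?_, hC, ?_⟩
  · have hβ : 0 ≤ β := (sum_nonneg fun i _ => abs_nonneg (a i)).trans ha
    obtain ⟨f, hf⟩ := exists_norm_sub_smul_sum_sq_le
      (fun p => (norm_l1Vertex β p).trans_le (abs_of_nonneg hβ).le)
      (exists_inner_l1Vertex_le ha) k
    refine Set.mem_iUnion₂.2 ⟨_, mem_image_of_mem _ (mem_univ f), ?_⟩
    rw [Metric.mem_ball, dist_eq_norm]
    exact lt_of_pow_lt_pow_left₀ 2 hε.le (hf.trans_lt hk)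
  · have hcard : (C.card : ℝ) ≤ (2 * d : ℝ) ^ k := by
      have hle : C.card ≤ (2 * d) ^ k := card_image_le.trans_eq (by simp [mul_comm])
      exact_mod_cast hle
    calc Real.log C.card ≤ Real.log ((2 * d : ℝ) ^ k) :=
          Real.log_le_log (by exact_mod_cast hC) hcard
      _ = k * Real.log (2 * d) := Real.log_pow _ _

/-- The `ε`-covering number (in the Euclidean norm) of the `ℓ¹` ball of
radius `β` in `ℝ^d` satisfies `log N ≤ ⌈β²/ε²⌉ · log(2d)`: there is a finite
set of centers covering the ball with Euclidean `ε`-balls whose cardinality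
`N` satisfies this bound. -/
theorem l1_ball_covering_number {d : ℕ} (hd : 0 < d) (β ε : ℝ)
    (hβ : 0 < β) (hε : 0 < ε) :
    ∃ C : Finset (EuclideanSpace ℝ (Fin d)),
      ({a : EuclideanSpace ℝ (Fin d) | ∑ i, |a i| ≤ β} ⊆
        ⋃ c ∈ C, Metric.ball c ε) ∧
      0 < C.card ∧
      Real.log C.card ≤ (⌈β ^ 2 / ε ^ 2⌉₊ : ℝ) * Real.log (2 * d) :=
  l1_ball_covering_number_general hd β ε hε
end

section
/- (Telescoping layer-perturbation bound for deep networks) Let F_A(x) = σ_L(A^{(L)} σ_{L-1}(⋯ σ_1(A^{(1)} x) ⋯)) where each σ_l is ρ_l-Lipschitz with σ_l(0) = 0 and ‖A^{(l)}‖_σ ≤ s_l, ‖Ã^{(l)}‖_σ ≤ s_l. Then for any x with ‖x‖₂ ≤ B_x, ‖F_A(x) - F_Ã(x)‖₂ ≤ B_x · (∏_{m=1}^L ρ_m s_m) · Σ_{l=1}^L ‖A^{(l)} - Ã^{(l)}‖_σ / s_l. -/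
/-! Induct on the depth. At layer `l` the error splits as
`A u - A' u' = A (u - u') + (A - A') u'`: the first part propagates the error accumulated so far
with gain `ρ_l s_l`, the second is the fresh perturbation applied to the activation `u'` of the
perturbed network, whose norm is at most `(∏_{m<l} ρ_m s_m) ‖x‖` because every `σ_m` fixes `0`. -/

/-- A fully connected network with linear layers `A l` and activations `σ l`:
`net A σ L x = σ_{L-1}(A_{L-1}( ⋯ σ_0(A_0 x) ⋯ ))`. -/
def net {E : ℕ → Type*} [∀ l, NormedAddCommGroup (E l)]
    [∀ l, NormedSpace ℝ (E l)]
    (A : ∀ l, E l →L[ℝ] E (l + 1)) (σ : ∀ l, E (l + 1) → E (l + 1)) :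
    ∀ L, E 0 → E L
  | 0 => id
  | (L + 1) => fun x => σ L (A L (net A σ L x))

open Finset

theorem ContinuousLinearMap.norm_apply_sub_apply_le {𝕜 E F : Type*} [NontriviallyNormedField 𝕜]
    [SeminormedAddCommGroup E] [SeminormedAddCommGroup F] [NormedSpace 𝕜 E] [NormedSpace 𝕜 F]
    (f g : E →L[𝕜] F) (u v : E) :
    ‖f u - g v‖ ≤ ‖f‖ * ‖u - v‖ + ‖f - g‖ * ‖v‖ :=
  calc ‖f u - g v‖ = ‖f (u - v) + (f - g) v‖ := by
        rw [map_sub, sub_apply, sub_add_sub_cancel]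
    _ ≤ ‖f‖ * ‖u - v‖ + ‖f - g‖ * ‖v‖ :=
        (norm_add_le _ _).trans (add_le_add (f.le_opNorm _) ((f - g).le_opNorm _))

section

variable {E : ℕ → Type*} [∀ l, NormedAddCommGroup (E l)] [∀ l, NormedSpace ℝ (E l)]
  (σ : ∀ l, E (l + 1) → E (l + 1)) (ρ s : ℕ → ℝ)

theorem norm_net_le (A : ∀ l, E l →L[ℝ] E (l + 1)) (hρ : ∀ l, 0 ≤ ρ l)
    (hσ : ∀ l u, ‖σ l u‖ ≤ ρ l * ‖u‖) (hA : ∀ l, ‖A l‖ ≤ s l) (x : E 0) (L : ℕ) :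
    ‖net A σ L x‖ ≤ (∏ m ∈ range L, ρ m * s m) * ‖x‖ := by
  induction L with
  | zero => simp [net]
  | succ L ih =>
    have hsL : 0 ≤ s L := (norm_nonneg _).trans (hA L)
    have hρL := hρ L
    calc ‖net A σ (L + 1) x‖ ≤ ρ L * ‖A L (net A σ L x)‖ := hσ L _
      _ ≤ ρ L * (s L * ‖net A σ L x‖) := by gcongr; exact (A L).le_of_opNorm_le (hA L) _
      _ ≤ ρ L * (s L * ((∏ m ∈ range L, ρ m * s m) * ‖x‖)) := by gcongr
      _ = (∏ m ∈ range (L + 1), ρ m * s m) * ‖x‖ := by rw [prod_range_succ]; ring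

theorem norm_net_sub_net_le (A A' : ∀ l, E l →L[ℝ] E (l + 1)) (hs : ∀ l, 0 < s l)
    (hρ : ∀ l, 0 ≤ ρ l) (hσ : ∀ l u v, ‖σ l u - σ l v‖ ≤ ρ l * ‖u - v‖)
    (hσ0 : ∀ l, σ l 0 = 0) (hA : ∀ l, ‖A l‖ ≤ s l) (hA' : ∀ l, ‖A' l‖ ≤ s l)
    (x : E 0) (L : ℕ) :
    ‖net A σ L x - net A' σ L x‖
      ≤ ‖x‖ * (∏ m ∈ range L, ρ m * s m) * ∑ l ∈ range L, ‖A l - A' l‖ / s l := by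
  induction L with
  | zero => simp [net]
  | succ L ih =>
    set u := net A σ L x
    set u' := net A' σ L x
    set P := ∏ m ∈ range L, ρ m * s m
    set S := ∑ l ∈ range L, ‖A l - A' l‖ / s l
    have hu' : ‖u'‖ ≤ P * ‖x‖ :=
      norm_net_le σ ρ s A' hρ (fun l y => by simpa [hσ0] using hσ l y 0) hA' x L
    have hρL := hρ L
    calc ‖net A σ (L + 1) x - net A' σ (L + 1) x‖ ≤ ρ L * ‖A L u - A' L u'‖ := hσ L _ _
      _ ≤ ρ L * (‖A L‖ * ‖u - u'‖ + ‖A L - A' L‖ * ‖u'‖) := by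
        gcongr; exact (A L).norm_apply_sub_apply_le (A' L) u u'
      _ ≤ ρ L * (s L * (‖x‖ * P * S) + ‖A L - A' L‖ * (P * ‖x‖)) := by
        gcongr
        · exact (hs L).le
        · exact hA L
      _ = ‖x‖ * (P * (ρ L * s L)) * (S + ‖A L - A' L‖ / s L) := by
        field_simp [(hs L).ne']
      _ = ‖x‖ * (∏ m ∈ range (L + 1), ρ m * s m) * ∑ l ∈ range (L + 1), ‖A l - A' l‖ / s l := by
        rw [prod_range_succ, sum_range_succ]

end

theorem deep_network_perturbation_bound_general {E : ℕ → Type*}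
    [∀ l, NormedAddCommGroup (E l)] [∀ l, NormedSpace ℝ (E l)] (L : ℕ)
    (A A' : ∀ l, E l →L[ℝ] E (l + 1)) (σ : ∀ l, E (l + 1) → E (l + 1))
    (ρ s : ℕ → ℝ) (hs : ∀ l, 0 < s l) (hρ : ∀ l, 0 ≤ ρ l)
    (hσ : ∀ l, ∀ u v, ‖σ l u - σ l v‖ ≤ ρ l * ‖u - v‖)
    (hσ0 : ∀ l, σ l 0 = 0)
    (hA : ∀ l, ‖A l‖ ≤ s l) (hA' : ∀ l, ‖A' l‖ ≤ s l)
    (x : E 0) (Bx : ℝ) (hBx : ‖x‖ ≤ Bx) :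
    ‖net A σ L x - net A' σ L x‖
      ≤ Bx * (∏ m ∈ Finset.range L, ρ m * s m)
          * ∑ l ∈ Finset.range L, ‖A l - A' l‖ / s l := by
  have hP : 0 ≤ ∏ m ∈ range L, ρ m * s m :=
    prod_nonneg fun m _ => mul_nonneg (hρ m) (hs m).le
  have hS : 0 ≤ ∑ l ∈ range L, ‖A l - A' l‖ / s l :=
    sum_nonneg fun l _ => div_nonneg (norm_nonneg _) (hs l).le
  calc ‖net A σ L x - net A' σ L x‖
      ≤ ‖x‖ * (∏ m ∈ range L, ρ m * s m) * ∑ l ∈ range L, ‖A l - A' l‖ / s l :=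
        norm_net_sub_net_le σ ρ s A A' hs hρ hσ hσ0 hA hA' x L
    _ ≤ Bx * (∏ m ∈ range L, ρ m * s m) * ∑ l ∈ range L, ‖A l - A' l‖ / s l := by gcongr

/-- Telescoping layer-perturbation bound for deep networks: if each
activation `σ l` is `ρ l`-Lipschitz and fixes `0`, and all weight matrices of
both networks have spectral (operator) norm at most `s l`, then for `‖x‖ ≤ Bx`,
`‖F_A(x) - F_Ã(x)‖ ≤ Bx · (∏ ρ_m s_m) · Σ_l ‖A^{(l)} - Ã^{(l)}‖_σ / s_l`. -/
theorem deep_network_perturbation_bound {E : ℕ → Type*}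
    [∀ l, NormedAddCommGroup (E l)] [∀ l, NormedSpace ℝ (E l)] (L : ℕ)
    (A A' : ∀ l, E l →L[ℝ] E (l + 1)) (σ : ∀ l, E (l + 1) → E (l + 1))
    (ρ s : ℕ → ℝ) (hs : ∀ l, 0 < s l) (hρ : ∀ l, 0 ≤ ρ l)
    (hσ : ∀ l, ∀ u v, ‖σ l u - σ l v‖ ≤ ρ l * ‖u - v‖)
    (hσ0 : ∀ l, σ l 0 = 0)
    (hA : ∀ l, ‖A l‖ ≤ s l) (hA' : ∀ l, ‖A' l‖ ≤ s l)
    (x : E 0) (Bx : ℝ) (hBx0 : 0 < Bx) (hBx : ‖x‖ ≤ Bx) :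
    ‖net A σ L x - net A' σ L x‖
      ≤ Bx * (∏ m ∈ Finset.range L, ρ m * s m)
          * ∑ l ∈ Finset.range L, ‖A l - A' l‖ / s l :=
  deep_network_perturbation_bound_general L A A' σ ρ s hs hρ hσ hσ0 hA hA' x Bx hBx
end
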